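/- arXiv:1101.1104 — 2 statements merged into one kernel-verified Lean document; each statement's English description precedes it below -/
import Mathlib

section
/- For positive reals k1, k2, k_{-1}, e, x, the quantity ε := (k2/k1)·e/(e + x + (k_{-1}+k2)/k1)² satisfies ε ≤ k1·e·k2/(k1·e + k2)² ≤ 1/4. -/
/-! Clearing the factor `1 / k1` shows that `ε = k1 e k2 / (k1 e + k1 x + k₋₁ + k2) ^ 2`; dropping the
positive terms `k1 x + k₋₁` from the denominator gives the middle bound, and AM-GM `4 a b ≤ (a + b) ^ 2`
gives `1 / 4`. -/

theorem mul_div_add_sq_le_quarter {K : Type*} [Field K] [LinearOrder K] [IsStrictOrderedRing K]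
    (a b : K) : a * b / (a + b) ^ 2 ≤ 1 / 4 := by
  rcases (sq_nonneg (a + b)).eq_or_lt with h | h
  · rw [← h, div_zero]
    norm_num
  · rw [div_le_div_iff₀ h (by norm_num)]
    nlinarith [sq_nonneg (a - b)]

theorem div_mul_div_add_div_sq_eq {K : Type*} [Field K] (k1 k2 km1 e x : K) (hk1 : k1 ≠ 0) :
    (k2 / k1) * e / (e + x + (km1 + k2) / k1) ^ 2 = k1 * e * k2 / (k1 * e + k1 * x + km1 + k2) ^ 2 := by
  field_simp
  ring_nf

theorem epsilon_bound (k1 k2 km1 e x : ℝ) (hk1 : 0 < k1) (hk2 : 0 < k2)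
    (hkm1 : 0 < km1) (he : 0 < e) (hx : 0 < x) :
    (k2 / k1) * e / (e + x + (km1 + k2) / k1) ^ 2 ≤ k1 * e * k2 / (k1 * e + k2) ^ 2 ∧
    k1 * e * k2 / (k1 * e + k2) ^ 2 ≤ 1 / 4 := by
  have hden : k1 * e + k2 ≤ k1 * e + k1 * x + km1 + k2 := by linarith [mul_pos hk1 hx]
  rw [div_mul_div_add_div_sq_eq k1 k2 km1 e x hk1.ne']
  exact ⟨div_le_div_of_nonneg_left (by positivity) (by positivity)
      (pow_le_pow_left₀ (by positivity) hden 2),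
    mul_div_add_sq_le_quarter (k1 * e) k2⟩
end

section
/- Let A, B be n²×n² diagonal real matrices with strictly positive diagonal entries, Y ∈ ℝⁿ a column vector with positive entries, and V_n the all-ones column vector of size n. Then the n²×n² matrix D = A·((Y V_nᵀ) ⊗ I_n) + B is invertible. -/
/-!
The matrix `(Y Vᵀ) ⊗ I` sends `v` to `p ↦ Y p.1 * S p.2`, where `S j = ∑ i, v (i, j)`. So if
`D v = 0`, then `v (i, j) = -(a Y / b)(i, j) * S j`; summing over `i` gives `(1 + T j) * S j = 0`
with `T j = ∑ i, a (i, j) * Y i / b (i, j) ≥ 0`. Hence `S = 0`, and then `v = 0`.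
-/

open Matrix
open scoped Kronecker

namespace Matrix

variable {m n k R : Type*} [Fintype n] [DecidableEq n]

theorem of_const_kronecker_one_mulVec [Fintype k] [CommSemiring R] (Y : m → R) (v : k × n → R) :
    ((of fun i (_ : k) => Y i) ⊗ₖ (1 : Matrix n n R)) *ᵥ v =
      fun p => Y p.1 * ∑ j, v (j, p.2) := by
  ext p
  simp [mulVec, dotProduct, Fintype.sum_prod_type, one_apply, Finset.mul_sum]

variable [Fintype m] [DecidableEq m]

theorem isUnit_of_forall_mulVec_eq_zero [Field R] {A : Matrix m m R}
    (h : ∀ v, A *ᵥ v = 0 → v = 0) : IsUnit A := by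
  rwa [isUnit_iff_isUnit_det, isUnit_iff_ne_zero, ← separatingRight_iff_det_ne_zero,
    separatingRight_iff_forall_mulVec_eq_zero]

variable [Field R] [LinearOrder R] [IsStrictOrderedRing R]

theorem eq_zero_of_diagonal_mul_kronecker_add_diagonal_mulVec_eq_zero
    {a b : m × n → R} (ha : ∀ p, 0 ≤ a p) (hb : ∀ p, 0 < b p) {Y : m → R} (hY : ∀ i, 0 ≤ Y i)
    {v : m × n → R}
    (hv : (diagonal a * ((of fun i (_ : m) => Y i) ⊗ₖ (1 : Matrix n n R)) + diagonal b) *ᵥ v = 0) :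
    v = 0 := by
  set S : n → R := fun j => ∑ i, v (i, j)
  have hv_eq : ∀ p, v p = -(a p * Y p.1 / b p) * S p.2 := by
    intro p
    have hp := congrFun hv p
    simp only [add_mulVec, ← mulVec_mulVec, of_const_kronecker_one_mulVec, mulVec_diagonal,
      Pi.add_apply, Pi.zero_apply] at hp
    field_simp [(hb p).ne']
    linear_combination hp
  have hS : ∀ j, S j = 0 := by
    intro j
    set T := ∑ i, a (i, j) * Y i / b (i, j)
    have hT : 0 ≤ T := Finset.sum_nonneg fun i _ =>
      div_nonneg (mul_nonneg (ha _) (hY i)) (hb _).le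
    have hfix : (1 + T) * S j = 0 := by
      have : S j = ∑ i, -(a (i, j) * Y i / b (i, j)) * S j :=
        Finset.sum_congr rfl fun i _ => hv_eq (i, j)
      simp only [neg_mul, Finset.sum_neg_distrib, ← Finset.sum_mul] at this
      linear_combination this
    exact (mul_eq_zero.mp hfix).resolve_left (by positivity)
  ext p
  rw [hv_eq, hS, mul_zero, Pi.zero_apply]

theorem isUnit_diagonal_mul_kronecker_add_diagonal
    {a b : m × n → R} (ha : ∀ p, 0 ≤ a p) (hb : ∀ p, 0 < b p) {Y : m → R} (hY : ∀ i, 0 ≤ Y i) :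
    IsUnit (diagonal a * ((of fun i (_ : m) => Y i) ⊗ₖ (1 : Matrix n n R)) + diagonal b) :=
  isUnit_of_forall_mulVec_eq_zero fun _ =>
    eq_zero_of_diagonal_mul_kronecker_add_diagonal_mulVec_eq_zero ha hb hY

end Matrix

theorem invertCoeff (n : ℕ) (a b : Fin n × Fin n → ℝ)
    (ha : ∀ p, 0 < a p) (hb : ∀ p, 0 < b p)
    (Y : Fin n → ℝ) (hY : ∀ i, 0 < Y i) :
    IsUnit (Matrix.diagonal a *
      ((Matrix.of fun i _ : Fin n => Y i) ⊗ₖ (1 : Matrix (Fin n) (Fin n) ℝ)) +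
      Matrix.diagonal b) :=
  isUnit_diagonal_mul_kronecker_add_diagonal (fun p => (ha p).le) hb fun i => (hY i).le
end
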